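/- For every cake C and family S of pieces: Prope(C,2,S) ≥ Prop(C,2,S) · inf_{s∈S} Prope(s,2,S), where Prop(C,2,S) is the best guaranteed proportionality over all S-allocations to 2 agents, and Prope is the same restricted to envy-free S-allocations. -/

import Mathlib

open MeasureTheory
open scoped ENNReal

noncomputable section

variable {α : Type*}

/-- `sVal V S X` is the value `V^S(X)`. -/
def sVal [MeasurableSpace α] (V : Measure α) (S : Set (Set α)) (X : Set α) : ℝ≥0∞ :=
  ⨆ (s : Set α) (_ : s ∈ S ∧ s ⊆ X), V s

/-- An `S`-allocation of the cake `C`: each agent receives an `S`-piece, the pieces are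
pairwise disjoint and their union is contained in `C`. -/
def IsAlloc [MeasurableSpace α] (C : Set α) (S : Set (Set α)) {n : ℕ}
    (X : Fin n → Set α) : Prop :=
  (∀ i, X i ∈ S) ∧ (∀ i j, i ≠ j → Disjoint (X i) (X j)) ∧ (⋃ i, X i) ⊆ C

/-- Envy-freeness: each agent's `S`-value of their own piece is at least the `S`-value
of any other piece. -/
def IsEnvyFree [MeasurableSpace α] (S : Set (Set α)) {n : ℕ}
    (V : Fin n → Measure α) (X : Fin n → Set α) : Prop :=
  ∀ i j, sVal (V i) S (X j) ≤ sVal (V i) S (X i)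

/-- `Prop(C,n,S)`: the largest fraction that can be guaranteed to every agent by some
`S`-allocation, for the worst case over value measures (finite, absolutely continuous,
nonzero on `C`). -/
def propShare [MeasureSpace α] (C : Set α) (n : ℕ) (S : Set (Set α)) : ℝ≥0∞ :=
  ⨅ (V : Fin n → Measure α)
    (_ : ∀ i, IsFiniteMeasure (V i) ∧ V i ≪ volume ∧ V i C ≠ 0),
    ⨆ (X : Fin n → Set α) (_ : IsAlloc C S X), ⨅ i, V i (X i) / V i C

/-- `Prope(C,n,S)`: the same as `Prop(C,n,S)`, with the supremum restricted to envy-free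
`S`-allocations. -/
def propEF [MeasureSpace α] (C : Set α) (n : ℕ) (S : Set (Set α)) : ℝ≥0∞ :=
  ⨅ (V : Fin n → Measure α)
    (_ : ∀ i, IsFiniteMeasure (V i) ∧ V i ≪ volume ∧ V i C ≠ 0),
    ⨆ (X : Fin n → Set α) (_ : IsAlloc C S X ∧ IsEnvyFree S V X), ⨅ i, V i (X i) / V i C

/-!
Take an `S`-allocation giving each agent more than a `p`-share of `C`. If the two agents'
favourite pieces differ, handing each agent their favourite is envy-free and costs nobody
anything, which suffices as `e ≤ 1`.
Otherwise both agents value the same piece `s` at least as much as their own, hence more than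
`p` times `C`; dividing `s` envy-freely with factor `e < Prope(s,2,S)` gives each agent more
than `e · p` times `C`, and since every piece of that division lies in `S`, envy-freeness
within `s` is envy-freeness within `C`.
-/

section Allocation

variable [MeasurableSpace α] {S : Set (Set α)} {n : ℕ}

lemma sVal_eq_of_mem (V : Measure α) {t : Set α} (ht : t ∈ S) : sVal V S t = V t :=
  le_antisymm (iSup₂_le fun _ hs => measure_mono hs.2) (le_iSup₂_of_le t ⟨ht, subset_rfl⟩ le_rfl)

lemma isEnvyFree_iff {V : Fin n → Measure α} {X : Fin n → Set α} (hX : ∀ i, X i ∈ S) :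
    IsEnvyFree S V X ↔ ∀ i j, V i (X j) ≤ V i (X i) := by
  simp only [IsEnvyFree, sVal_eq_of_mem _ (hX _)]

variable {C : Set α} {X : Fin n → Set α}

lemma IsAlloc.subset (hX : IsAlloc C S X) (i : Fin n) : X i ⊆ C :=
  (Set.subset_iUnion X i).trans hX.2.2

lemma IsAlloc.mono {D : Set α} (hX : IsAlloc C S X) (hCD : C ⊆ D) : IsAlloc D S X :=
  ⟨hX.1, hX.2.1, hX.2.2.trans hCD⟩

lemma IsAlloc.comp_perm (hX : IsAlloc C S X) (σ : Equiv.Perm (Fin n)) :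
    IsAlloc C S (X ∘ σ) :=
  ⟨fun i => hX.1 (σ i), fun _ _ hij => hX.2.1 _ _ (σ.injective.ne hij),
    Set.iUnion_subset fun i => hX.subset (σ i)⟩

lemma isEnvyFree_restrict_iff {V : Fin n → Measure α} (hX : IsAlloc C S X) :
    IsEnvyFree S (fun i => (V i).restrict C) X ↔ IsEnvyFree S V X := by
  simp only [isEnvyFree_iff hX.1, Measure.restrict_eq_self _ (hX.subset _)]

end Allocation

lemma exists_perm_forall_le_or_exists_forall_le {β : Type*} [LinearOrder β]
    (f : Fin 2 → Fin 2 → β) :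
    (∃ σ : Equiv.Perm (Fin 2), ∀ i k, f i k ≤ f i (σ i)) ∨ ∃ k, ∀ i j, f i j ≤ f i k := by
  choose g hg using fun i => Finite.exists_max (f i)
  by_cases hg01 : g 0 = g 1
  · refine Or.inr ⟨g 0, fun i => ?_⟩
    fin_cases i
    · exact hg 0
    · simpa [hg01] using hg 1
  · have hinj : Function.Injective g := by
      intro i j
      fin_cases i <;> fin_cases j <;> simp [hg01, Ne.symm hg01]
    exact Or.inl ⟨Equiv.ofBijective g (Finite.injective_iff_bijective.mp hinj), hg⟩

section Shares

variable [MeasureSpace α] {C : Set α} {S : Set (Set α)} {n : ℕ} {V : Fin n → Measure α}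

lemma exists_isAlloc_of_lt_propShare {p : ℝ≥0∞}
    (hV : ∀ i, IsFiniteMeasure (V i) ∧ V i ≪ volume ∧ V i C ≠ 0) (hp : p < propShare C n S) :
    ∃ X, IsAlloc C S X ∧ ∀ i, p * V i C < V i (X i) := by
  obtain ⟨X, hX⟩ := lt_iSup_iff.mp (hp.trans_le (iInf₂_le V hV))
  obtain ⟨hXa, hXv⟩ := lt_iSup_iff.mp hX
  refine ⟨X, hXa, fun i => ?_⟩
  have := (hV i).1
  exact (ENNReal.lt_div_iff_mul_lt (.inl (hV i).2.2) (.inl (measure_ne_top _ _))).mp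
    (hXv.trans_le (iInf_le _ i))

lemma exists_isEnvyFree_of_lt_propEF {q : ℝ≥0∞}
    (hV : ∀ i, IsFiniteMeasure (V i) ∧ V i ≪ volume ∧ V i C ≠ 0) (hq : q < propEF C n S) :
    ∃ X, IsAlloc C S X ∧ IsEnvyFree S V X ∧ ∀ i, q * V i C < V i (X i) := by
  obtain ⟨X, hX⟩ := lt_iSup_iff.mp (hq.trans_le (iInf₂_le V hV))
  obtain ⟨⟨hXa, hXef⟩, hXv⟩ := lt_iSup_iff.mp hX
  refine ⟨X, hXa, hXef, fun i => ?_⟩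
  have := (hV i).1
  exact (ENNReal.lt_div_iff_mul_lt (.inl (hV i).2.2) (.inl (measure_ne_top _ _))).mp
    (hXv.trans_le (iInf_le _ i))

lemma le_propEF_of_forall {q : ℝ≥0∞}
    (h : ∀ V : Fin n → Measure α, (∀ i, IsFiniteMeasure (V i) ∧ V i ≪ volume ∧ V i C ≠ 0) →
      ∃ X, IsAlloc C S X ∧ IsEnvyFree S V X ∧ ∀ i, q * V i C ≤ V i (X i)) :
    q ≤ propEF C n S := by
  refine le_iInf₂ fun V hV => ?_
  obtain ⟨X, hXa, hXef, hXv⟩ := h V hV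
  refine le_iSup₂_of_le X ⟨hXa, hXef⟩ (le_iInf fun i => ?_)
  have := (hV i).1
  exact (ENNReal.le_div_iff_mul_le (.inl (hV i).2.2) (.inl (measure_ne_top _ _))).mpr (hXv i)

lemma propEF_le_one [NeZero n] (μ : Measure α) [IsFiniteMeasure μ] (hμ : μ ≪ volume)
    (hC : μ C ≠ 0) : propEF C n S ≤ 1 := by
  refine (iInf₂_le (fun _ => μ) fun _ => ⟨inferInstance, hμ, hC⟩).trans
    (iSup₂_le fun X hX => (iInf_le _ 0).trans ?_)
  exact ENNReal.div_le_of_le_mul (by simpa using measure_mono (hX.1.subset 0))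

lemma exists_isEnvyFree_of_lt_propEF_piece {s : Set α} {e : ℝ≥0∞}
    (hV : ∀ i, IsFiniteMeasure (V i) ∧ V i ≪ volume) (hsC : s ⊆ C)
    (hs : ∀ i, V i s ≠ 0) (he : e < propEF s n S) :
    ∃ Z, IsAlloc C S Z ∧ IsEnvyFree S V Z ∧ ∀ i, e * V i s < V i (Z i) := by
  have hW : ∀ i, IsFiniteMeasure ((V i).restrict s) ∧ (V i).restrict s ≪ volume ∧
      (V i).restrict s s ≠ 0 := fun i =>
    have := (hV i).1
    ⟨inferInstance, Measure.restrict_le_self.absolutelyContinuous.trans (hV i).2,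
      by rw [Measure.restrict_apply_self]; exact hs i⟩
  obtain ⟨Z, hZa, hZef, hZv⟩ := exists_isEnvyFree_of_lt_propEF hW he
  refine ⟨Z, hZa.mono hsC, (isEnvyFree_restrict_iff hZa).mp hZef, fun i => ?_⟩
  simpa only [Measure.restrict_apply_self, Measure.restrict_eq_self _ (hZa.subset i)] using hZv i

end Shares

/-- For every cake `C` and family `S`:
`Prope(C,2,S) ≥ Prop(C,2,S) · inf_{s ∈ S} Prope(s,2,S)`. -/
theorem propEF_ge_propShare_mul_inf [MeasureSpace α] (C : Set α) (S : Set (Set α)) :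
    propShare C 2 S * ⨅ s ∈ S, propEF s 2 S ≤ propEF C 2 S := by
  refine ENNReal.mul_le_of_forall_lt fun p hp e he => le_propEF_of_forall fun V hV => ?_
  have hVfin : ∀ i, IsFiniteMeasure (V i) := fun i => (hV i).1
  have he_piece : ∀ s ∈ S, e < propEF s 2 S := fun s hs => he.trans_le (iInf₂_le s hs)
  obtain ⟨X, hX, hXv⟩ := exists_isAlloc_of_lt_propShare hV hp
  rcases exists_perm_forall_le_or_exists_forall_le (fun i k => V i (X k)) with ⟨σ, hσ⟩ | ⟨k, hk⟩
  · have he1 : e ≤ 1 := (he_piece _ (hX.1 0)).le.trans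
      (propEF_le_one (V 0) (hV 0).2.1 (ne_zero_of_lt (hXv 0)))
    refine ⟨X ∘ σ, hX.comp_perm σ, (isEnvyFree_iff (hX.comp_perm σ).1).mpr
      fun i j => hσ i (σ j), fun i => ?_⟩
    calc p * e * V i C ≤ p * V i C := by gcongr; exact mul_le_of_le_one_right' he1
      _ ≤ V i (X i) := (hXv i).le
      _ ≤ V i (X (σ i)) := hσ i i
  · have hXk : ∀ i, p * V i C < V i (X k) := fun i => (hXv i).trans_le (hk i i)
    obtain ⟨Z, hZ, hZef, hZv⟩ := exists_isEnvyFree_of_lt_propEF_piece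
      (fun i => ⟨(hV i).1, (hV i).2.1⟩) (hX.subset k) (fun i => ne_zero_of_lt (hXk i))
      (he_piece _ (hX.1 k))
    refine ⟨Z, hZ, hZef, fun i => ?_⟩
    calc p * e * V i C = e * (p * V i C) := by ring
      _ ≤ e * V i (X k) := by gcongr; exact (hXk i).le
      _ ≤ V i (Z i) := (hZv i).le
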